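/- If φ = (φ_i)_{i≥1} is a sequence of real numbers with φ_i ≥ 0 for all i ≥ 1, then for every n ≥ 1 the generalized Bell polynomial Be_n^φ has n simple (distinct) real zeros, all of which are ≤ 0. -/

import Mathlib

open Polynomial

/-- The Bell polynomials: `Bell 0 = 1`, `Bell (n+1) = x·(Bell n + (Bell n)')`. -/
noncomputable def Bell : ℕ → Polynomial ℝ
  | 0 => 1
  | n + 1 => X * (Bell n + derivative (Bell n))

/-- `Phi φ n i` is the elementary symmetric polynomial of degree `i` in `φ 1, …, φ n`. -/
noncomputable def Phi (φ : ℕ → ℝ) (n i : ℕ) : ℝ :=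
  ∑ s ∈ Finset.powersetCard i (Finset.Icc 1 n), ∏ j ∈ s, φ j

/-- The generalized Bell polynomial `Be_n^φ = ∑_{j=0}^n Φ^n_{n-j} Be_j`. -/
noncomputable def genBell (φ : ℕ → ℝ) (n : ℕ) : Polynomial ℝ :=
  ∑ j ∈ Finset.range (n + 1), C (Phi φ n (n - j)) * Bell j

/-- The sequence `φ^{{l}}` obtained from `φ` by removing its `l`-th term
(sequences indexed from 1). -/
def removeIdx (φ : ℕ → ℝ) (l : ℕ) (i : ℕ) : ℝ := if i < l then φ i else φ (i + 1)

/-- The sequence `φ^{l,M}`, obtained by adding `M` to the `l`-th term of `φ`. -/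
def addAt (φ : ℕ → ℝ) (l : ℕ) (M : ℝ) (i : ℕ) : ℝ := φ i + if i = l then M else 0

/-- A finite set `U` of reals interlaces a finite set `V` if between any two consecutive
elements of `U` there lies exactly one element of `V`, and either `|U| = |V| + 1`, or
`|U| = |V|` and `max U < max V`. -/
def Interlaces (U V : Finset ℝ) : Prop :=
  (∀ u₁ ∈ U, ∀ u₂ ∈ U, u₁ < u₂ → (∀ u ∈ U, ¬(u₁ < u ∧ u < u₂)) →
    ∃! v, v ∈ V ∧ u₁ < v ∧ v < u₂) ∧
  (U.card = V.card + 1 ∨ (U.card = V.card ∧ U.max < V.max))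

/-- `zeta φ n k` is the `k`-th zero (in increasing order, `k` counted from 1) of the
generalized Bell polynomial `Be_n^φ`. -/
noncomputable def zeta (φ : ℕ → ℝ) (n k : ℕ) : ℝ :=
  ((genBell φ n).roots.toFinset.sort (· ≤ ·)).getD (k - 1) 0

lemma Phi_zero_right (φ : ℕ → ℝ) (n : ℕ) : Phi φ n 0 = 1 := by
  simp [Phi]

lemma Phi_eq_zero (φ : ℕ → ℝ) {n i : ℕ} (h : n < i) : Phi φ n i = 0 := by
  have hc : (Finset.Icc 1 n).card < i := by
    rw [Nat.card_Icc]; omega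
  rw [Phi, Finset.powersetCard_eq_empty.2 hc, Finset.sum_empty]

lemma Phi_succ (φ : ℕ → ℝ) (n i : ℕ) :
    Phi φ (n + 1) (i + 1) = Phi φ n (i + 1) + φ (n + 1) * Phi φ n i := by
  have hni : (n + 1) ∉ Finset.Icc 1 n := by simp
  have hIcc : Finset.Icc 1 (n + 1) = insert (n + 1) (Finset.Icc 1 n) := by
    ext x; simp [Finset.mem_Icc, Finset.mem_insert]; omega
  have hdisj : Disjoint (Finset.powersetCard (i + 1) (Finset.Icc 1 n))
      ((Finset.powersetCard i (Finset.Icc 1 n)).image (insert (n + 1))) := by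
    rw [Finset.disjoint_left]
    intro s hs hs'
    obtain ⟨t, ht, rfl⟩ := Finset.mem_image.1 hs'
    have : (n+1) ∈ Finset.Icc 1 n := (Finset.mem_powersetCard.1 hs).1 (Finset.mem_insert_self _ _)
    exact hni this
  rw [Phi, hIcc, Finset.powersetCard_succ_insert hni, Finset.sum_union hdisj]
  congr 1
  rw [Finset.sum_image]
  · rw [Phi, Finset.mul_sum]
    apply Finset.sum_congr rfl
    intro s hs
    have hns : (n + 1) ∉ s := fun hmem => hni ((Finset.mem_powersetCard.1 hs).1 hmem)
    rw [Finset.prod_insert hns]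
  · intro s hs t ht hst
    have hns : (n + 1) ∉ s := fun hmem => hni ((Finset.mem_powersetCard.1 hs).1 hmem)
    have hnt : (n + 1) ∉ t := fun hmem => hni ((Finset.mem_powersetCard.1 ht).1 hmem)
    have := congrArg (Finset.erase · (n+1)) hst
    simpa [Finset.erase_insert, hns, hnt] using this

lemma genBell_succ (φ : ℕ → ℝ) (n : ℕ) :
    genBell φ (n + 1) =
      X * (genBell φ n + derivative (genBell φ n)) + C (φ (n + 1)) * genBell φ n := by
  have hder : derivative (genBell φ n)
      = ∑ j ∈ Finset.range (n + 1), C (Phi φ n (n - j)) * derivative (Bell j) := by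
    rw [genBell, derivative_sum]
    exact Finset.sum_congr rfl fun j _ => derivative_C_mul _ _
  rw [genBell]
  rw [Finset.sum_range_succ]
  have hstep : ∀ k ∈ Finset.range (n + 1),
      C (Phi φ (n + 1) (n + 1 - k)) * Bell k
        = C (Phi φ n (n + 1 - k)) * Bell k + C (φ (n+1)) * (C (Phi φ n (n - k)) * Bell k) := by
    intro k hk
    have hk' : k ≤ n := Nat.lt_succ_iff.1 (Finset.mem_range.1 hk)
    have h1 : n + 1 - k = (n - k) + 1 := by omega
    rw [h1, Phi_succ, C_add, C_mul]
    ring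
  rw [Finset.sum_congr rfl hstep, Finset.sum_add_distrib]
  have h2 : ∑ k ∈ Finset.range (n+1), C (φ (n+1)) * (C (Phi φ n (n - k)) * Bell k)
      = C (φ (n+1)) * genBell φ n := by
    rw [genBell, Finset.mul_sum]
  have h3 : Phi φ (n+1) (n + 1 - (n+1)) = 1 := by simp [Phi_zero_right]
  have h4 : ∑ k ∈ Finset.range (n+1), C (Phi φ n (n + 1 - k)) * Bell k + C (Phi φ (n+1) (n+1-(n+1))) * Bell (n+1)
      = X * (genBell φ n + derivative (genBell φ n)) := by
    rw [h3, C_1, one_mul]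
    have h5 : C (Phi φ n (n + 1 - (n+1))) * Bell (n+1) = Bell (n+1) := by simp [Phi_zero_right]
    rw [← h5, ← Finset.sum_range_succ (fun k => C (Phi φ n (n + 1 - k)) * Bell k)]
    rw [Finset.sum_range_succ' (fun k => C (Phi φ n (n + 1 - k)) * Bell k)]
    have h6 : C (Phi φ n (n + 1 - 0)) * Bell 0 = 0 := by
      rw [Nat.sub_zero, Phi_eq_zero φ (Nat.lt_succ_self n), C_0, zero_mul]
    rw [h6, add_zero]
    have h7 : ∀ k ∈ Finset.range (n+1),
        C (Phi φ n (n + 1 - (k+1))) * Bell (k+1)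
          = X * (C (Phi φ n (n - k)) * Bell k + C (Phi φ n (n - k)) * derivative (Bell k)) := by
      intro k hk
      have : n + 1 - (k + 1) = n - k := by omega
      rw [this, Bell]
      ring
    rw [Finset.sum_congr rfl h7, ← Finset.mul_sum, Finset.sum_add_distrib, ← hder]
    unfold genBell
    rfl
  rw [add_right_comm, h4, h2]

/-- A sign change of a polynomial forces a root in between. -/
lemma exists_root_Ioo (q : Polynomial ℝ) {a b : ℝ} (hab : a < b)
    (h : q.eval a * q.eval b < 0) : ∃ x ∈ Set.Ioo a b, q.eval x = 0 := by
  have hcont : ContinuousOn (fun x => q.eval x) (Set.Icc a b) :=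
    (q.continuous).continuousOn
  rcases lt_or_ge (q.eval a) 0 with ha | ha
  · have hb : 0 < q.eval b := by
      rcases lt_trichotomy (q.eval b) 0 with h' | h' | h'
      · nlinarith
      · nlinarith [h' ▸ h]
      · exact h'
    have := intermediate_value_Ioo hab.le hcont (Set.mem_Ioo.2 ⟨ha, hb⟩)
    obtain ⟨x, hx, hx0⟩ := this
    exact ⟨x, hx, hx0⟩
  · have ha' : 0 < q.eval a := by
      rcases eq_or_lt_of_le ha with h' | h'
      · exfalso; rw [← h'] at h; simp at h
      · exact h'
    have hb : q.eval b < 0 := by nlinarith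
    have := intermediate_value_Ioo' hab.le hcont (Set.mem_Ioo.2 ⟨hb, ha'⟩)
    obtain ⟨x, hx, hx0⟩ := this
    exact ⟨x, hx, hx0⟩

/-- A monic polynomial of odd-signed normalization is eventually of sign
`(-1)^(natDegree)` towards `-∞`; we only need: for every bound `B` there is `t < B`
with `0 < (-1)^(q.natDegree) * q.eval t`. -/
lemma exists_sign_at_bot (q : Polynomial ℝ) (hq : q.Monic) (hdeg : 0 < q.natDegree) (B : ℝ) :
    ∃ t, t < B ∧ 0 < (-1 : ℝ) ^ q.natDegree * q.eval t := by
  set P : Polynomial ℝ := C ((-1 : ℝ) ^ q.natDegree) * q.comp (-X) with hP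
  have hXdeg : (-X : Polynomial ℝ).natDegree = 1 := by
    rw [natDegree_neg, natDegree_X]
  have hlcP : P.leadingCoeff = 1 := by
    rw [hP, leadingCoeff_mul, leadingCoeff_C, leadingCoeff_comp (by rw [hXdeg]; norm_num)]
    rw [hq.leadingCoeff, leadingCoeff_neg, leadingCoeff_X]
    rw [one_mul, ← pow_add]
    exact Even.neg_one_pow ⟨q.natDegree, by ring⟩
  have hPne : P ≠ 0 := fun h => by simp [h] at hlcP
  have hPdeg : P.natDegree = q.natDegree := by
    rw [hP, natDegree_C_mul (pow_ne_zero _ (by norm_num)), natDegree_comp, hXdeg, mul_one]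
  have hPdeg' : 0 < P.degree := by
    rw [degree_eq_natDegree hPne, hPdeg]
    exact_mod_cast hdeg
  have htend := P.tendsto_atTop_of_leadingCoeff_nonneg hPdeg' (by rw [hlcP]; norm_num)
  have hev : ∀ᶠ x in Filter.atTop, 0 < eval x P ∧ -B < x :=
    (htend.eventually_gt_atTop 0).and (Filter.eventually_gt_atTop (-B))
  obtain ⟨x, hx1, hx2⟩ := hev.exists
  refine ⟨-x, by linarith, ?_⟩
  have : eval x P = (-1 : ℝ) ^ q.natDegree * q.eval (-x) := by
    rw [hP]; simp [eval_comp]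
  rwa [← this]

lemma step_monic {p : Polynomial ℝ} (hm : p.Monic) (c : ℝ) :
    (X * (p + derivative p) + C c * p).Monic ∧
      (X * (p + derivative p) + C c * p).natDegree = p.natDegree + 1 := by
  have hp0 : p ≠ 0 := hm.ne_zero
  have hq_eq : X * (p + derivative p) + C c * p = X * p + (X * derivative p + C c * p) := by
    ring
  have hXp : (X * p).Monic := monic_X.mul hm
  have h1b : (1 : WithBot ℕ) ≠ ⊥ := by simp
  have hd1 : (X * derivative p).degree < (X * p).degree := by
    rw [degree_mul, degree_mul, degree_X]
    exact WithBot.add_lt_add_left h1b (degree_derivative_lt hp0)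
  have hXpdeg : (X * p).degree = ((p.natDegree + 1 : ℕ) : WithBot ℕ) := by
    rw [degree_mul, degree_X, degree_eq_natDegree hp0]
    exact_mod_cast (by omega : 1 + p.natDegree = p.natDegree + 1)
  have hd2 : (C c * p).degree < (X * p).degree := by
    have h1 : (C c * p).degree ≤ p.degree := by
      refine (degree_mul_le (C c) p).trans ?_
      have h2 : (C c).degree + p.degree ≤ 0 + p.degree := add_le_add_left degree_C_le _
      rwa [zero_add] at h2
    refine lt_of_le_of_lt h1 ?_
    rw [hXpdeg, degree_eq_natDegree hp0]
    exact_mod_cast Nat.lt_succ_self _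
  have hrest : (X * derivative p + C c * p).degree < (X * p).degree :=
    lt_of_le_of_lt (degree_add_le _ _) (max_lt hd1 hd2)
  constructor
  · rw [hq_eq]; exact hXp.add_of_left hrest
  · have hdeq : (X * (p + derivative p) + C c * p).degree = (X * p).degree := by
      rw [hq_eq]; exact degree_add_eq_left_of_degree_lt hrest
    rw [natDegree_eq_of_degree_eq hdeq, natDegree_mul X_ne_zero hp0, natDegree_X]
    omega

lemma lemA {p : Polynomial ℝ} {m : ℕ} (hm : p.Monic) (hdeg : p.natDegree = m)
    (hcard : Multiset.card p.roots = m) (hnd : p.roots.Nodup)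
    (hneg : ∀ x ∈ p.roots, x < 0) {c : ℝ} (hc : 0 ≤ c) :
    (X * (p + derivative p) + C c * p).Monic ∧
      (X * (p + derivative p) + C c * p).natDegree = m + 1 ∧
      Multiset.card (X * (p + derivative p) + C c * p).roots = m + 1 ∧
      (X * (p + derivative p) + C c * p).roots.Nodup ∧
      (∀ x ∈ (X * (p + derivative p) + C c * p).roots, x ≤ 0) := by
  classical
  set q : Polynomial ℝ := X * (p + derivative p) + C c * p with hq
  have hp0 : p ≠ 0 := hm.ne_zero
  obtain ⟨hqm', hqdeg'⟩ := step_monic hm c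
  have hqm : q.Monic := hqm'
  have hqdeg : q.natDegree = m + 1 := by rw [hq, hqdeg', hdeg]
  have hqne : q ≠ 0 := hqm.ne_zero
  -- the sorted list of roots
  set L : List ℝ := p.roots.toFinset.sort (· ≤ ·) with hL
  have hLco : (↑L : Multiset ℝ) = p.roots := by
    rw [hL, Finset.sort_eq, Multiset.toFinset_val, Multiset.dedup_eq_self.2 hnd]
  have hlen : L.length = m := by
    have : Multiset.card (↑L : Multiset ℝ) = m := by rw [hLco, hcard]
    simpa using this
  set r : Fin m → ℝ := fun i => L.get (Fin.cast hlen.symm i) with hr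
  have hrmono : StrictMono r := by
    intro i j hij
    exact (Finset.sortedLT_sort _).strictMono_get hij
  have hmemr : ∀ i, r i ∈ p.roots := by
    intro i
    rw [← hLco]
    exact Multiset.mem_coe.2 (List.get_mem _ _)
  have hrneg : ∀ i, r i < 0 := fun i => hneg _ (hmemr i)
  -- product formula
  have hprod : p = ∏ i : Fin m, (X - C (r i)) := by
    have h0 := prod_multiset_X_sub_C_of_monic_of_roots_card_eq hm (by rw [hcard, hdeg])
    rw [← h0, ← hLco, Multiset.map_coe, Multiset.prod_coe]
    have hmap : L.map (fun a => X - C a) = List.ofFn (fun i : Fin m => X - C (r i)) := by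
      apply List.ext_get
      · simp [hlen]
      · intro n h1 h2
        simp only [List.get_eq_getElem, List.getElem_map, List.getElem_ofFn, hr]
        rfl
    rw [hmap, List.prod_ofFn]
  have hp0pos : 0 < p.eval 0 := by
    rw [hprod]
    rw [eval_prod]
    apply Finset.prod_pos
    intro i _
    have := hrneg i
    simp only [eval_sub, eval_X, eval_C]
    linarith
  -- derivative evaluated at roots
  have hpeval' : ∀ k : Fin m,
      (derivative p).eval (r k) = ∏ j ∈ Finset.univ.erase k, (r k - r j) := by
    intro k
    have hfac : p = (X - C (r k)) * ∏ j ∈ Finset.univ.erase k, (X - C (r j)) := by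
      rw [hprod]
      exact (Finset.mul_prod_erase _ _ (Finset.mem_univ k)).symm
    have h2 := congrArg derivative hfac
    rw [derivative_mul] at h2
    rw [h2]
    simp [eval_prod, sub_self]
  -- sign of derivative at roots
  have hsignD : ∀ k : Fin m, 0 < (-1 : ℝ) ^ (m - 1 - (k : ℕ)) * (derivative p).eval (r k) := by
    intro k
    rw [hpeval' k]
    have hsplit : Finset.univ.erase k = Finset.Iio k ∪ Finset.Ioi k := by
      ext j
      simp only [Finset.mem_erase, Finset.mem_union, Finset.mem_Iio, Finset.mem_Ioi,
        Finset.mem_univ, and_true]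
      exact ne_iff_lt_or_gt
    have hdisj : Disjoint (Finset.Iio k) (Finset.Ioi k) :=
      Finset.disjoint_left.2 fun j h1 h2 =>
        absurd (Finset.mem_Iio.1 h1) (not_lt.2 (Finset.mem_Ioi.1 h2).le)
    rw [hsplit, Finset.prod_union hdisj]
    have hpos1 : 0 < ∏ j ∈ Finset.Iio k, (r k - r j) :=
      Finset.prod_pos fun j hj => sub_pos.2 (hrmono (Finset.mem_Iio.1 hj))
    have hpos2 : 0 < ∏ j ∈ Finset.Ioi k, (r j - r k) :=
      Finset.prod_pos fun j hj => sub_pos.2 (hrmono (Finset.mem_Ioi.1 hj))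
    have h2 : ∏ j ∈ Finset.Ioi k, (r k - r j)
        = (-1 : ℝ) ^ (m - 1 - (k : ℕ)) * ∏ j ∈ Finset.Ioi k, (r j - r k) := by
      calc ∏ j ∈ Finset.Ioi k, (r k - r j) = ∏ j ∈ Finset.Ioi k, (-1) * (r j - r k) := by
            apply Finset.prod_congr rfl; intros; ring
        _ = (-1 : ℝ) ^ (Finset.Ioi k).card * ∏ j ∈ Finset.Ioi k, (r j - r k) := by
            rw [Finset.prod_mul_distrib, Finset.prod_const]
        _ = (-1 : ℝ) ^ (m - 1 - (k : ℕ)) * ∏ j ∈ Finset.Ioi k, (r j - r k) := by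
            rw [Fin.card_Ioi]
    rw [h2]
    have hsq : (-1 : ℝ) ^ (m - 1 - (k : ℕ)) * (-1) ^ (m - 1 - (k : ℕ)) = 1 := by
      rw [← pow_add]; exact Even.neg_one_pow ⟨m - 1 - (k : ℕ), by ring⟩
    nlinarith [mul_pos hpos1 hpos2, hsq]
  -- q evaluated at roots of p
  have hqeval : ∀ k : Fin m, q.eval (r k) = r k * (derivative p).eval (r k) := by
    intro k
    have hroot : p.eval (r k) = 0 := isRoot_of_mem_roots (hmemr k)
    simp [hq, eval_mul, eval_add, hroot]
  have hqsign : ∀ k : Fin m, 0 < (-1 : ℝ) ^ (m - (k : ℕ)) * q.eval (r k) := by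
    intro k
    rw [hqeval k]
    have hk : (k : ℕ) < m := k.isLt
    have he : m - (k : ℕ) = (m - 1 - (k : ℕ)) + 1 := by omega
    rw [he, pow_succ]
    nlinarith [mul_pos (neg_pos.2 (hrneg k)) (hsignD k)]
  -- point far to the left
  obtain ⟨t, htB, htsign⟩ : ∃ t, (t < 0 ∧ ∀ i, t < r i) ∧ 0 < (-1 : ℝ) ^ (m + 1) * q.eval t := by
    obtain ⟨B, hB0, hBr⟩ : ∃ B, B < 0 ∧ ∀ i, B < r i := by
      rcases Nat.eq_zero_or_pos m with hm0 | hm0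
      · exact ⟨-1, by norm_num, fun i => Fin.elim0 (Fin.cast hm0 i)⟩
      · refine ⟨r ⟨0, hm0⟩ - 1, by have := hrneg ⟨0, hm0⟩; linarith, ?_⟩
        intro i
        have : r ⟨0, hm0⟩ ≤ r i := hrmono.monotone (by simp [Fin.le_def])
        linarith
    obtain ⟨t, ht1, ht2⟩ := exists_sign_at_bot q hqm (by omega) B
    rw [hqdeg] at ht2
    exact ⟨t, ⟨by linarith [hBr, hB0], fun i => lt_of_lt_of_le ht1 (hBr i).le⟩, ht2⟩
  -- the chain of sign points
  set z : ℕ → ℝ := fun k => if hk : 1 ≤ k ∧ k ≤ m then r ⟨k - 1, by omega⟩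
    else if k = 0 then t else 0 with hzdef
  have hz0 : z 0 = t := by simp [hzdef]
  have hzmid : ∀ k : ℕ, 1 ≤ k → k ≤ m → ∀ h : k - 1 < m, z k = r ⟨k - 1, h⟩ := by
    intro k h1 h2 h
    simp [hzdef, h1, h2]
  have hztop : ∀ k : ℕ, m + 1 ≤ k → z k = 0 := by
    intro k hk
    have h1 : ¬(1 ≤ k ∧ k ≤ m) := by omega
    have h2 : ¬(k = 0) := by omega
    simp [hzdef, h1, h2]
  have hzle : ∀ k, z k ≤ 0 := by
    intro k
    rw [hzdef]
    dsimp only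
    split_ifs with h1 h2
    · exact (hrneg _).le
    · exact htB.1.le
    · exact le_refl 0
  have hzneg : ∀ k ≤ m, z k < 0 := by
    intro k hk
    rw [hzdef]
    dsimp only
    split_ifs with h1 h2
    · exact hrneg _
    · exact htB.1
    · omega
  have hzmono : ∀ j k : ℕ, j < k → k ≤ m + 1 → z j < z k := by
    intro j k hjk hk
    rcases Nat.eq_or_lt_of_le hk with hk1 | hk1
    · rw [hk1, hztop (m+1) le_rfl]
      exact hzneg j (by omega)
    · have hkm : k ≤ m := by omega
      have hk1' : 1 ≤ k := by omega
      rw [hzmid k hk1' hkm (by omega)]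
      rcases Nat.eq_zero_or_pos j with hj0 | hj0
      · rw [hj0, hz0]; exact htB.2 _
      · rw [hzmid j hj0 (by omega) (by omega)]
        exact hrmono (by simp [Fin.lt_def]; omega)
  have hzsign : ∀ k : ℕ, k ≤ m → 0 < (-1 : ℝ) ^ (m + 1 - k) * q.eval (z k) := by
    intro k hk
    rcases Nat.eq_zero_or_pos k with hk0 | hk0
    · rw [hk0, hz0, Nat.sub_zero]
      exact htsign
    · rw [hzmid k hk0 hk (by omega)]
      have he : m + 1 - k = m - (k - 1) := by omega
      rw [he]
      exact hqsign ⟨k - 1, by omega⟩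
  have hq0 : 0 ≤ q.eval 0 := by
    have : q.eval 0 = c * p.eval 0 := by simp [hq]
    rw [this]
    exact mul_nonneg hc hp0pos.le
  -- a root in each interval
  have hroot : ∀ k : ℕ, k ≤ m → ∃ y, y ∈ Set.Ioc (z k) (z (k+1)) ∧ q.eval y = 0 ∧ y ≤ 0 := by
    intro k hk
    rcases Nat.eq_or_lt_of_le hk with hkm | hkm
    · -- last interval : z m to 0
      have hzm : z (k+1) = 0 := hztop _ (by omega)
      have hneg' : q.eval (z k) < 0 := by
        have := hzsign k hk
        rw [hkm] at this ⊢
        rw [show m + 1 - m = 1 by omega, pow_one] at this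
        linarith
      have hcont : ContinuousOn (fun x => q.eval x) (Set.Icc (z k) 0) :=
        (q.continuous).continuousOn
      have hmem : (0:ℝ) ∈ Set.Ioc (q.eval (z k)) (q.eval 0) := ⟨hneg', hq0⟩
      have := intermediate_value_Ioc (hzle k) hcont hmem
      obtain ⟨y, hy1, hy2⟩ := this
      exact ⟨y, by rw [hzm]; exact hy1, hy2, hy1.2⟩
    · -- interior interval, sign change
      have e1 := hzsign k hk
      have e2 := hzsign (k+1) (by omega)
      have he1 : m + 1 - k = (m - k) + 1 := by omega
      have he2 : m + 1 - (k + 1) = m - k := by omega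
      rw [he1, pow_succ] at e1
      rw [he2] at e2
      have hsq : (-1:ℝ) ^ (m - k) * (-1) ^ (m - k) = 1 := by
        rw [← pow_add]; exact Even.neg_one_pow ⟨m - k, by ring⟩
      have hprodneg : q.eval (z k) * q.eval (z (k+1)) < 0 := by
        nlinarith [mul_pos e1 e2, hsq]
      obtain ⟨y, hy1, hy2⟩ := exists_root_Ioo q (hzmono k (k+1) (by omega) (by omega)) hprodneg
      exact ⟨y, ⟨hy1.1, hy1.2.le⟩, hy2, le_trans hy1.2.le (hzle _)⟩
  have hroot' : ∀ k : Fin (m+1), ∃ y, y ∈ Set.Ioc (z k) (z (k+1)) ∧ q.eval y = 0 ∧ y ≤ 0 :=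
    fun k => hroot k (by omega)
  choose Y hY1 hY2 hY3 using hroot'
  have hYmono : StrictMono Y := by
    intro a b hab
    have h1 : Y a ≤ z (↑a + 1) := (hY1 a).2
    have h2 : z ↑b < Y b := (hY1 b).1
    have h3 : z (↑a + 1) ≤ z ↑b := by
      have hab' : (↑a : ℕ) < ↑b := hab
      rcases Nat.eq_or_lt_of_le (show (↑a : ℕ) + 1 ≤ ↑b by omega) with h | h
      · rw [h]
      · exact (hzmono _ _ h (by omega)).le
    linarith
  set S : Finset ℝ := Finset.image Y Finset.univ with hS
  have hScard : S.card = m + 1 := by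
    rw [hS, Finset.card_image_of_injective _ hYmono.injective, Finset.card_univ,
      Fintype.card_fin]
  have hSsub : S.val ≤ q.roots := by
    refine (Multiset.le_iff_subset S.nodup).2 ?_
    intro x hx
    have hx' : x ∈ S := hx
    obtain ⟨k, _, rfl⟩ := Finset.mem_image.1 hx'
    exact (mem_roots hqne).2 (hY2 k)
  have hcards : Multiset.card q.roots ≤ m + 1 := by
    rw [← hqdeg]; exact q.card_roots'
  have heq : S.val = q.roots := by
    apply Multiset.eq_of_le_of_card_le hSsub
    have : Multiset.card S.val = m + 1 := hScard
    omega
  refine ⟨hqm, hqdeg, ?_, ?_, ?_⟩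
  · rw [← heq]
    exact hScard
  · rw [← heq]
    exact S.nodup
  · intro x hx
    rw [← heq] at hx
    obtain ⟨k, _, rfl⟩ := Finset.mem_image.1 (show x ∈ S from hx)
    exact hY3 k

lemma stepI {p : Polynomial ℝ} {m : ℕ} (hm : p.Monic) (hdeg : p.natDegree = m)
    (hcard : Multiset.card p.roots = m) (hnd : p.roots.Nodup)
    (hle : ∀ x ∈ p.roots, x ≤ 0) {c : ℝ} (hc : 0 ≤ c) :
    (X * (p + derivative p) + C c * p).Monic ∧
      (X * (p + derivative p) + C c * p).natDegree = m + 1 ∧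
      Multiset.card (X * (p + derivative p) + C c * p).roots = m + 1 ∧
      (X * (p + derivative p) + C c * p).roots.Nodup ∧
      (∀ x ∈ (X * (p + derivative p) + C c * p).roots, x ≤ 0) := by
  by_cases h0 : (0 : ℝ) ∈ p.roots
  · have hp0 : p ≠ 0 := hm.ne_zero
    have hm1 : 1 ≤ m := by
      have := Multiset.card_pos_iff_exists_mem.2 ⟨0, h0⟩
      omega
    have hdvd : X ∣ p := by
      have := (dvd_iff_isRoot (a := (0:ℝ))).2 (isRoot_of_mem_roots h0)
      simpa using this
    obtain ⟨p₁, hp₁⟩ := hdvd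
    have hp₁ne : p₁ ≠ 0 := fun h => hp0 (by rw [hp₁, h, mul_zero])
    have hmX : (X * p₁).Monic := hp₁ ▸ hm
    have hm₁ : p₁.Monic := monic_X.of_mul_monic_left hmX
    have hdeg₁ : p₁.natDegree = m - 1 := by
      have : p.natDegree = 1 + p₁.natDegree := by
        rw [hp₁, natDegree_mul X_ne_zero hp₁ne, natDegree_X]
      omega
    have hroots : p.roots = 0 ::ₘ p₁.roots := by
      rw [hp₁, roots_mul (hp₁ ▸ hp0), roots_X, Multiset.singleton_add]
    have hcard₁ : Multiset.card p₁.roots = m - 1 := by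
      have := hcard
      rw [hroots] at this
      simp at this
      omega
    have hnd₁ : p₁.roots.Nodup := by
      rw [hroots] at hnd
      exact (Multiset.nodup_cons.1 hnd).2
    have h0notin : (0 : ℝ) ∉ p₁.roots := by
      rw [hroots] at hnd
      exact (Multiset.nodup_cons.1 hnd).1
    have hneg₁ : ∀ x ∈ p₁.roots, x < 0 := by
      intro x hx
      have hx' : x ∈ p.roots := by rw [hroots]; exact Multiset.mem_cons_of_mem hx
      refine lt_of_le_of_ne (hle x hx') fun h => h0notin (h ▸ hx)
    obtain ⟨hq₁m, hq₁deg, hq₁card, hq₁nd, hq₁le⟩ :=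
      lemA hm₁ hdeg₁ hcard₁ hnd₁ hneg₁ (show (0:ℝ) ≤ c + 1 by linarith)
    set q₁ : Polynomial ℝ := X * (p₁ + derivative p₁) + C (c + 1) * p₁ with hq₁
    have hid : X * (p + derivative p) + C c * p = X * q₁ := by
      rw [hq₁, hp₁, derivative_mul, derivative_X, C_add, C_1]
      ring
    have hq₁ne : q₁ ≠ 0 := hq₁m.ne_zero
    have h0q₁ : (0:ℝ) ∉ q₁.roots := by
      intro hmem
      have he : q₁.eval 0 = 0 := isRoot_of_mem_roots hmem
      rw [hq₁] at he
      simp only [eval_add, eval_mul, eval_X, eval_C, zero_mul, zero_add] at he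
      have hp₁0 : p₁.eval 0 ≠ 0 := fun h => h0notin ((mem_roots hp₁ne).2 h)
      have : c + 1 > 0 := by linarith
      rcases mul_eq_zero.1 he with h | h
      · linarith
      · exact hp₁0 h
    have hXq₁ne : X * q₁ ≠ 0 := mul_ne_zero X_ne_zero hq₁ne
    have hrootsq : (X * (p + derivative p) + C c * p).roots = 0 ::ₘ q₁.roots := by
      rw [hid, roots_mul hXq₁ne, roots_X, Multiset.singleton_add]
    obtain ⟨hqm, hqdeg⟩ := step_monic hm c
    refine ⟨hqm, by rw [hqdeg, hdeg], ?_, ?_, ?_⟩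
    · rw [hrootsq]
      simp [hq₁card]
      omega
    · rw [hrootsq]
      exact Multiset.nodup_cons.2 ⟨h0q₁, hq₁nd⟩
    · intro x hx
      rw [hrootsq] at hx
      rcases Multiset.mem_cons.1 hx with h | h
      · rw [h]
      · exact hq₁le x h
  · have hneg : ∀ x ∈ p.roots, x < 0 := fun x hx =>
      lt_of_le_of_ne (hle x hx) fun h => h0 (h ▸ hx)
    exact lemA hm hdeg hcard hnd hneg hc

lemma genBell_invariant (φ : ℕ → ℝ) (hφ : ∀ i, 1 ≤ i → 0 ≤ φ i) (n : ℕ) :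
    (genBell φ n).Monic ∧ (genBell φ n).natDegree = n ∧
      Multiset.card (genBell φ n).roots = n ∧ (genBell φ n).roots.Nodup ∧
      ∀ x ∈ (genBell φ n).roots, x ≤ 0 := by
  induction n with
  | zero =>
    have h1 : genBell φ 0 = 1 := by
      simp [genBell, Phi_zero_right, Bell]
    rw [h1]
    refine ⟨monic_one, natDegree_one, ?_, ?_, ?_⟩ <;> simp [roots_one]
  | succ n ih =>
    obtain ⟨h1, h2, h3, h4, h5⟩ := ih
    rw [genBell_succ]
    exact stepI h1 h2 h3 h4 h5 (hφ (n + 1) (by omega))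

/-- if `φ_i ≥ 0` for all `i ≥ 1`, then for every `n ≥ 1` the polynomial
`Be_n^φ` has `n` simple (distinct) real zeros, all `≤ 0`. -/
theorem genBell_roots_real_simple_nonpos (φ : ℕ → ℝ) (hφ : ∀ i, 1 ≤ i → 0 ≤ φ i)
    (n : ℕ) (hn : 1 ≤ n) :
    (genBell φ n).roots.card = n ∧ (genBell φ n).roots.Nodup ∧
      ∀ x ∈ (genBell φ n).roots, x ≤ 0 := by
  obtain ⟨h1, h2, h3, h4, h5⟩ := genBell_invariant φ hφ n
  exact ⟨by rw [h3], h4, h5⟩
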